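/- arXiv:2604.06087 — 3 statements merged into one kernel-verified Lean document; each statement's English description precedes it below -/
import Mathlib

section
/- Let (V, L, s, t) be a lattice, T ⊆ L a spanning tree, v₀ ∈ V a fixed root, and A an additive commutative group. Then the map Φ : (L → A) → ({ℓ : L // ℓ ∉ T} → A) × ({v : V // v ≠ v₀} → A) given by Φ k = (the restriction of k to L ∖ T, the restriction of ∇ k to V ∖ {v₀}) is a bijection, and indeed an isomorphism of additive groups. (This is the trivialization of the Gauss law bundle: for each choice of electric data on the non-tree links and each vertex charge configuration away from the root, there is a unique compatible electric configuration on the tree links.) -/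
open Finset

/-- The divergence map of a lattice. -/
def divergence {V L : Type*} [Fintype L] [DecidableEq V] {A : Type*} [AddCommGroup A]
    (s t : L → V) (k : L → A) : V → A :=
  fun v => (∑ ℓ ∈ univ.filter fun ℓ => s ℓ = v, k ℓ) -
    ∑ ℓ ∈ univ.filter fun ℓ => t ℓ = v, k ℓ

/-- The simple graph on the vertices of a lattice. -/
def latticeGraph {V L : Type*} (s t : L → V) : SimpleGraph V :=
  SimpleGraph.fromRel fun v w => ∃ ℓ, s ℓ = v ∧ t ℓ = w

/-- `T` is a spanning tree of the lattice `(V, L, s, t)`: it has `|V| - 1` links and the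
lattice `(V, T)` is connected. -/
def IsSpanningTree {V L : Type*} [Fintype V] (s t : L → V) (T : Finset L) : Prop :=
  T.card = Fintype.card V - 1 ∧ Nonempty V ∧
    (latticeGraph (fun ℓ : {x // x ∈ T} => s ℓ.1) fun ℓ : {x // x ∈ T} => t ℓ.1).Connected

/-- The trivialization map of the Gauss law bundle associated with a spanning tree `T` and
root `v₀`: it records the electric data on the non-tree links and the vertex charges away
from the root. -/
def treeTrivialization {V L : Type*} [Fintype L] [DecidableEq V]
    (s t : L → V) (T : Finset L) (v₀ : V) (A : Type*) [AddCommGroup A] :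
    (L → A) → ({ℓ : L // ℓ ∉ T} → A) × ({v : V // v ≠ v₀} → A) :=
  fun k => (fun ℓ => k ℓ.1, fun v => divergence s t k v.1)

/-!
Surjectivity comes from the tree: routing a value `a` along a tree path from `v` to `v₀` gives a
configuration supported on `T` with divergence `a δ_v - a δ_{v₀}`, and superposing such flows
corrects the divergence of any prescribed non-tree data. Injectivity is then forced by counting,
since `|L ∖ T| + |V ∖ {v₀}| = |L|`: the map is the action of a square integer matrix (identity
rows for the non-tree links stacked on incidence rows of the non-root vertices) which is
surjective over `ℤ`, hence invertible over `ℤ`, and its inverse acts on `A`-valued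
configurations as well.
-/

namespace Matrix

variable {I J K R A : Type*} [Fintype J] [Semiring R] [AddCommMonoid A] [Module R A]

def smulVec (M : Matrix I J R) (k : J → A) : I → A := fun i => ∑ j, M i j • k j

theorem smulVec_eq_mulVec (M : Matrix I J R) (k : J → R) : M.smulVec k = M *ᵥ k := by
  ext i
  simp only [smulVec, mulVec, dotProduct, smul_eq_mul]

theorem smulVec_smulVec [Fintype K] (N : Matrix I K R) (M : Matrix K J R) (k : J → A) :
    N.smulVec (M.smulVec k) = (N * M).smulVec k := by
  ext i
  simp only [smulVec, Finset.smul_sum, smul_smul, mul_apply, Finset.sum_smul]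
  exact Finset.sum_comm

theorem one_smulVec [DecidableEq J] (k : J → A) : (1 : Matrix J J R).smulVec k = k := by
  ext j
  simp [smulVec, one_apply, ite_smul]

theorem smulVec_bijective_of_mulVec_surjective [Fintype I] [DecidableEq I] [DecidableEq J]
    [IsStablyFiniteRing R] (M : Matrix I J R) (hcard : Fintype.card I = Fintype.card J)
    (hM : Function.Surjective M.mulVec) :
    Function.Bijective (M.smulVec (A := A)) := by
  obtain ⟨N, hMN⟩ := mulVec_surjective_iff_exists_right_inverse.mp hM
  have hNM : N * M = 1 := (mul_eq_one_comm_of_card_eq I J R hcard).mp hMN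
  refine Function.bijective_iff_has_inverse.mpr ⟨N.smulVec, fun k => ?_, fun k => ?_⟩
  · rw [smulVec_smulVec, hNM, one_smulVec]
  · rw [smulVec_smulVec, hMN, one_smulVec]

end Matrix

section Lattice

variable {V L A : Type*} [DecidableEq V] (s t : L → V)

def incidenceMatrix : Matrix V L ℤ :=
  Matrix.of fun v ℓ => (if s ℓ = v then 1 else 0) - (if t ℓ = v then 1 else 0)

def gaussMatrix [DecidableEq L] (T : Finset L) (v₀ : V) :
    Matrix ({ℓ : L // ℓ ∉ T} ⊕ {v : V // v ≠ v₀}) L ℤ :=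
  Matrix.fromRows ((1 : Matrix L L ℤ).submatrix Subtype.val id)
    ((incidenceMatrix s t).submatrix Subtype.val id)

variable [Fintype L] [AddCommGroup A]

theorem divergence_add (k₁ k₂ : L → A) :
    divergence s t (k₁ + k₂) = divergence s t k₁ + divergence s t k₂ := by
  ext v
  simp only [divergence, Pi.add_apply, Finset.sum_add_distrib]
  abel

theorem divergence_sum {ι : Type*} (u : Finset ι) (k : ι → L → A) :
    divergence s t (∑ i ∈ u, k i) = ∑ i ∈ u, divergence s t (k i) := by
  ext v
  simp only [divergence, Finset.sum_apply, Finset.sum_sub_distrib]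
  congr 1 <;> exact Finset.sum_comm

theorem divergence_single [DecidableEq L] (ℓ : L) (a : A) :
    divergence s t (Pi.single ℓ a) = Pi.single (s ℓ) a - Pi.single (t ℓ) a := by
  ext v
  simp [divergence, Pi.single_apply, eq_comm]

theorem divergence_eq_smulVec (k : L → A) :
    divergence s t k = (incidenceMatrix s t).smulVec k := by
  ext v
  simp only [divergence, Matrix.smulVec, incidenceMatrix, Matrix.of_apply, sub_smul, ite_smul,
    one_smul, zero_smul, Finset.sum_sub_distrib, Finset.sum_ite, Finset.sum_const_zero, add_zero]

theorem treeTrivialization_eq_smulVec [DecidableEq L] (T : Finset L) (v₀ : V) :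
    treeTrivialization s t T v₀ A =
      Equiv.sumArrowEquivProdArrow _ _ A ∘ (gaussMatrix s t T v₀).smulVec := by
  ext k ℓ
  · simp [treeTrivialization, gaussMatrix, Matrix.smulVec, Matrix.one_apply]
  · simp [treeTrivialization, gaussMatrix, divergence_eq_smulVec, Matrix.smulVec]

theorem treeTrivialization_add (T : Finset L) (v₀ : V) (k₁ k₂ : L → A) :
    treeTrivialization s t T v₀ A (k₁ + k₂) =
      treeTrivialization s t T v₀ A k₁ + treeTrivialization s t T v₀ A k₂ := by
  simp only [treeTrivialization, divergence_add]
  rfl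

variable {s t}

theorem exists_treeSupported_divergence_eq_single_sub_single (T : Finset L)
    (hconn : (latticeGraph (fun ℓ : {x // x ∈ T} => s ℓ.1) fun ℓ => t ℓ.1).Connected)
    (v w : V) (a : A) :
    ∃ k : L → A, (∀ ℓ ∉ T, k ℓ = 0) ∧ divergence s t k = Pi.single v a - Pi.single w a := by
  classical
  obtain ⟨p⟩ := hconn.preconnected v w
  induction p with
  | nil => exact ⟨0, fun _ _ => rfl, by ext; simp [divergence]⟩
  | @cons u u' w hadj _ ih =>
    obtain ⟨k, hkT, hk⟩ := ih
    obtain ⟨-, ⟨ℓ, rfl, rfl⟩ | ⟨ℓ, rfl, rfl⟩⟩ := (SimpleGraph.fromRel_adj _ _ _).mp hadj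
    · refine ⟨Pi.single ℓ.1 a + k, fun ℓ' hℓ' => ?_, ?_⟩
      · simp [ne_of_mem_of_not_mem ℓ.2 hℓ' |>.symm, hkT ℓ' hℓ']
      · rw [divergence_add, divergence_single, hk]
        abel
    · refine ⟨Pi.single ℓ.1 (-a) + k, fun ℓ' hℓ' => ?_, ?_⟩
      · simp [ne_of_mem_of_not_mem ℓ.2 hℓ' |>.symm, hkT ℓ' hℓ']
      · rw [divergence_add, divergence_single, hk, Pi.single_neg, Pi.single_neg]
        abel

theorem exists_treeSupported_divergence_eq [Fintype V] (T : Finset L)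
    (hconn : (latticeGraph (fun ℓ : {x // x ∈ T} => s ℓ.1) fun ℓ => t ℓ.1).Connected)
    (v₀ : V) (c : V → A) :
    ∃ k : L → A, (∀ ℓ ∉ T, k ℓ = 0) ∧ divergence s t k = c - Pi.single v₀ (∑ v, c v) := by
  choose k hkT hk using fun v =>
    exists_treeSupported_divergence_eq_single_sub_single T hconn v v₀ (c v)
  refine ⟨∑ v, k v, fun ℓ hℓ => by simp [hkT _ ℓ hℓ], ?_⟩
  rw [divergence_sum, Finset.sum_congr rfl fun v _ => hk v, Finset.sum_sub_distrib,
    Finset.univ_sum_single]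
  exact congrArg (c - ·) (map_sum (AddMonoidHom.single (fun _ : V => A) v₀) c _).symm

theorem treeTrivialization_surjective [Fintype V] (T : Finset L)
    (hconn : (latticeGraph (fun ℓ : {x // x ∈ T} => s ℓ.1) fun ℓ => t ℓ.1).Connected)
    (v₀ : V) : Function.Surjective (treeTrivialization s t T v₀ A) := by
  classical
  rintro ⟨a, b⟩
  set k₀ : L → A := fun ℓ => if h : ℓ ∈ T then 0 else a ⟨ℓ, h⟩
  -- the charge prescribed at `v₀` is irrelevant, so extend `b` by `0` there
  obtain ⟨k, hkT, hk⟩ := exists_treeSupported_divergence_eq T hconn v₀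
    fun v => (if h : v = v₀ then 0 else b ⟨v, h⟩) - divergence s t k₀ v
  refine ⟨k₀ + k, Prod.ext (funext fun ℓ => ?_) (funext fun v => ?_)⟩
  · simp [treeTrivialization, k₀, ℓ.2, hkT ℓ ℓ.2]
  · simp [treeTrivialization, divergence_add, hk, v.2]

end Lattice

theorem card_nonTree_sum_nonRoot {V L : Type*} [Fintype V] [Fintype L] [DecidableEq V]
    [DecidableEq L] {T : Finset L} (hT : T.card = Fintype.card V - 1) (v₀ : V) :
    Fintype.card ({ℓ : L // ℓ ∉ T} ⊕ {v : V // v ≠ v₀}) = Fintype.card L := by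
  -- `Fintype.card V - 1` is truncated subtraction
  have hV : 0 < Fintype.card V := Fintype.card_pos_iff.mpr ⟨v₀⟩
  have hTL : T.card ≤ Fintype.card L := Finset.card_le_univ T
  simp only [Fintype.card_sum, Fintype.card_subtype_compl, Fintype.card_coe,
    Fintype.card_subtype_eq]
  omega

/-- Trivialization of the Gauss law bundle: given a spanning tree `T` with root `v₀`, the
map sending an electric configuration `k` to (its restriction to the non-tree links, the
restriction of `∇ k` away from the root) is a bijection, and indeed an isomorphism of
additive groups. -/
theorem treeTrivialization_bijective_and_additive
    {V L : Type*} [Fintype V] [Fintype L] [DecidableEq V]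
    (s t : L → V) (T : Finset L) (hT : IsSpanningTree s t T) (v₀ : V)
    (A : Type*) [AddCommGroup A] :
    Function.Bijective (treeTrivialization s t T v₀ A) ∧
      ∀ k₁ k₂ : L → A,
        treeTrivialization s t T v₀ A (k₁ + k₂) =
          treeTrivialization s t T v₀ A k₁ + treeTrivialization s t T v₀ A k₂ := by
  classical
  obtain ⟨hcard, -, hconn⟩ := hT
  have hsurj : Function.Surjective (gaussMatrix s t T v₀).mulVec := by
    have h := treeTrivialization_surjective (A := ℤ) T hconn v₀
    rwa [treeTrivialization_eq_smulVec, EquivLike.comp_surjective,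
      funext (Matrix.smulVec_eq_mulVec _)] at h
  refine ⟨?_, treeTrivialization_add s t T v₀⟩
  rw [treeTrivialization_eq_smulVec]
  exact (Equiv.bijective _).comp <| Matrix.smulVec_bijective_of_mulVec_surjective _
    (card_nonTree_sum_nonRoot hcard v₀) hsurj
end

section
/- For χ : L → Ĝ, the Wilson line operator W^χ commutes with the gauge transformation U^g for every g : V → G if and only if ∂ χ is the trivial configuration (i.e., (∂ χ) v = 1 in Ĝ for every vertex v). In other words, a Wilson line operator is a logical (gauge-invariant) operator of the Gauss law code precisely when it has trivial Gauss law syndrome. -/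
/-!
The Gauss law map is dual to the gauge coboundary `g ↦ (ℓ ↦ g (s ℓ) * (g (t ℓ))⁻¹)`:
`∏ v, (∂χ) v (g v) = ∏ ℓ, χ ℓ (g (s ℓ) * (g (t ℓ))⁻¹)`. Hence moving `U^g` past the
multiplication operator `W^χ` produces exactly this scalar phase, so `U^g` and `W^χ` commute iff
the phase is `1`. The phase is trivial for all `g` iff `∂χ` is, as one sees by evaluating at
`g = Pi.mulSingle v x`.
-/

open Finset

variable {V L : Type*} [Fintype V] [Fintype L] [DecidableEq V]
variable {G : Type*} [CommGroup G] [Fintype G]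

/-- The gauge transformation `U^g` on the kinematical Hilbert space `(L → G) → ℂ`. -/
def Ugauge (s t : L → V) (g : V → G) : ((L → G) → ℂ) → ((L → G) → ℂ) :=
  fun f a => f fun ℓ => (g (s ℓ))⁻¹ * a ℓ * g (t ℓ)

/-- The Wilson line (multiplication) operator `W^χ` for a family of characters `χ`. -/
def Wline (χ : L → (G →* ℂˣ)) : ((L → G) → ℂ) → ((L → G) → ℂ) :=
  fun f a => (((∏ ℓ, χ ℓ (a ℓ))⁻¹ : ℂˣ) : ℂ) • f a

/-- The Gauss law map `∂`, assigning to link character data the vertex charge it excites. -/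
def gaussMap (s t : L → V) (χ : L → (G →* ℂˣ)) : V → (G →* ℂˣ) :=
  fun v => (∏ ℓ ∈ univ.filter fun ℓ => s ℓ = v, χ ℓ) *
    ∏ ℓ ∈ univ.filter fun ℓ => t ℓ = v, (χ ℓ)⁻¹

lemma Finset.prod_fiberwise_dep {ι κ M : Type*} [Fintype ι] [Fintype κ] [DecidableEq κ]
    [CommMonoid M] (p : ι → κ) (F : ι → κ → M) :
    ∏ j, ∏ i with p i = j, F i j = ∏ i, F i (p i) := by
  rw [← prod_fiberwise univ p fun i => F i (p i)]
  exact prod_congr rfl fun j _ => prod_congr rfl fun i hi => by rw [(mem_filter.1 hi).2]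

theorem forall_prod_apply_eq_one_iff {ι G M : Type*} [Fintype ι] [DecidableEq ι] [Monoid G]
    [CommMonoid M] (ψ : ι → G →* M) : (∀ g : ι → G, ∏ i, ψ i (g i) = 1) ↔ ∀ i, ψ i = 1 := by
  refine ⟨fun h i => MonoidHom.ext fun x => ?_, fun h g => by simp [h]⟩
  simpa [Pi.apply_mulSingle (fun j => ψ j) (fun j => map_one (ψ j))] using h (Pi.mulSingle i x)

section

omit [Fintype G]

theorem prod_gaussMap_apply (s t : L → V) (χ : L → (G →* ℂˣ)) (g : V → G) :
    ∏ v, gaussMap s t χ v (g v) = ∏ ℓ, χ ℓ (g (s ℓ) * (g (t ℓ))⁻¹) := by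
  simp only [gaussMap, MonoidHom.mul_apply, MonoidHom.finsetProd_apply, MonoidHom.inv_apply,
    prod_mul_distrib, prod_fiberwise_dep, map_mul, map_inv]

theorem prod_apply_gauge (s t : L → V) (χ : L → (G →* ℂˣ)) (g : V → G) (a : L → G) :
    ∏ ℓ, χ ℓ ((g (s ℓ))⁻¹ * a ℓ * g (t ℓ)) =
      (∏ v, gaussMap s t χ v (g v))⁻¹ * ∏ ℓ, χ ℓ (a ℓ) := by
  simp only [prod_gaussMap_apply, map_mul, map_inv, prod_mul_distrib, prod_inv_distrib, mul_inv,
    inv_inv]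
  exact mul_right_comm _ _ _

theorem Ugauge_Wline_eq_smul (s t : L → V) (χ : L → (G →* ℂˣ)) (g : V → G) (f : (L → G) → ℂ) :
    Ugauge s t g (Wline χ f) =
      ((∏ v, gaussMap s t χ v (g v) : ℂˣ) : ℂ) • Wline χ (Ugauge s t g f) := by
  funext a
  simp only [Ugauge, Wline, prod_apply_gauge, mul_inv, inv_inv, Pi.smul_apply, smul_eq_mul,
    Units.val_mul]
  ring

theorem Ugauge_comp_Wline_eq_iff (s t : L → V) (χ : L → (G →* ℂˣ)) (g : V → G) :
    Ugauge s t g ∘ Wline χ = Wline χ ∘ Ugauge s t g ↔ ∏ v, gaussMap s t χ v (g v) = 1 := by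
  refine ⟨fun h => ?_, fun h => funext fun f => by simp [Ugauge_Wline_eq_smul, h]⟩
  have hW : Wline χ (Ugauge s t g 1) 1 = 1 := by simp [Wline, Ugauge]
  have h1 := congrFun (congrFun h 1) 1
  rw [Function.comp_apply, Function.comp_apply, Ugauge_Wline_eq_smul, Pi.smul_apply, hW,
    smul_eq_mul, mul_one] at h1
  exact Units.val_eq_one.mp h1

end

/-- A Wilson line operator commutes with every gauge transformation (i.e., is a logical
operator of the Gauss law code) if and only if its Gauss law syndrome is trivial. -/
theorem wilson_logical_iff_trivial_syndrome (s t : L → V) (χ : L → (G →* ℂˣ)) :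
    (∀ g : V → G, Ugauge s t g ∘ Wline χ = Wline χ ∘ Ugauge s t g) ↔
      ∀ v : V, gaussMap s t χ v = 1 := by
  simp only [Ugauge_comp_Wline_eq_iff, forall_prod_apply_eq_one_iff]
end

section
/- (Antiparticle annihilation operator as a polynomial in the particle ladder operators, Eq. (3.52) of the paper.) For every natural number D ≥ 2, the antiparticle annihilation operator satisfies ā = ∑_{k=1}^{D−2} ∑_{m=1}^{k} ( Real.sqrt ((D − m) / (m! * (m+1)!)) * (−1)^{k−m} / (k−m)! ) • ((a†)^(k+1) * a^k) + (Real.sqrt ((D−1)!))⁻¹ • a^(D−1), as an identity in Matrix (Fin D) (Fin D) ℂ (for D = 2 the double sum is empty and the identity reads ā = a). -/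
open Finset Matrix

/-- The truncated annihilation operator `a = ∑_{m=0}^{D-2} √(m+1) • E_{m, m+1}` on `ℂ^D`. -/
noncomputable def annOp (D : ℕ) : Matrix (Fin D) (Fin D) ℂ :=
  ∑ m : Fin (D - 1),
    (Real.sqrt ((m : ℕ) + 1) : ℂ) •
      Matrix.single (⟨(m : ℕ), by have h := m.2; omega⟩ : Fin D)
        ⟨(m : ℕ) + 1, by have h := m.2; omega⟩ 1

/-- The antiparticle annihilation operator
`ā = ∑_{m=1}^{D-1} √(D−m) • E_{(m+1) mod D, m}` on `ℂ^D`. -/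
noncomputable def antiAnnOp (D : ℕ) : Matrix (Fin D) (Fin D) ℂ :=
  ∑ m ∈ (Finset.Icc 1 (D - 1)).attach,
    (Real.sqrt ((D : ℝ) - (m : ℕ)) : ℂ) •
      Matrix.single
        (⟨((m : ℕ) + 1) % D,
          Nat.mod_lt _ (by have h := Finset.mem_Icc.mp m.2; omega)⟩ : Fin D)
        ⟨(m : ℕ), by have h := Finset.mem_Icc.mp m.2; omega⟩ 1

lemma annOp_apply (D : ℕ) (i j : Fin D) :
    annOp D i j = if (i:ℕ)+1 = (j:ℕ) then ((Real.sqrt ((i:ℕ)+1) : ℝ) : ℂ) else 0 := by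
  unfold annOp
  rw [Matrix.sum_apply]
  by_cases h : (i:ℕ)+1 = (j:ℕ)
  · have hi : (i:ℕ) < D - 1 := by have := j.2; omega
    rw [Finset.sum_eq_single (⟨(i:ℕ), hi⟩ : Fin (D-1))]
    · simp [Matrix.single, Fin.ext_iff, h.symm]
    · intro b _ hb
      simp only [Matrix.smul_apply, Matrix.single, Matrix.of_apply, smul_eq_mul]
      rw [if_neg, mul_zero]
      rintro ⟨h1, h2⟩
      exact hb (by rw [Fin.ext_iff] at h1 ⊢; simpa using h1)
    · intro hmem; exact absurd (Finset.mem_univ _) hmem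
  · rw [if_neg h]
    apply Finset.sum_eq_zero
    intro b _
    simp only [Matrix.smul_apply, Matrix.single, Matrix.of_apply, smul_eq_mul]
    rw [if_neg, mul_zero]
    rintro ⟨h1, h2⟩
    rw [Fin.ext_iff] at h1 h2
    simp at h1 h2; omega

lemma annOp_pow_apply (D : ℕ) (k : ℕ) (i j : Fin D) :
    (annOp D ^ k) i j = if (i:ℕ)+k = (j:ℕ) then
      ((Real.sqrt (Nat.factorial (j:ℕ)) / Real.sqrt (Nat.factorial (i:ℕ)) : ℝ) : ℂ) else 0 := by
  induction k generalizing i j with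
  | zero =>
    rw [pow_zero, Matrix.one_apply]
    by_cases h : i = j
    · subst h; rw [if_pos rfl, if_pos (by omega)]
      rw [div_self (by positivity)]; norm_num
    · rw [if_neg h, if_neg (by rw [Fin.ext_iff] at h; omega)]
  | succ k ih =>
    rw [pow_succ, Matrix.mul_apply]
    by_cases h : (i:ℕ)+(k+1) = (j:ℕ)
    · have hl : (i:ℕ)+k < D := by have := j.2; omega
      rw [Finset.sum_eq_single (⟨(i:ℕ)+k, hl⟩ : Fin D)]
      · rw [ih, annOp_apply]
        rw [if_pos (by simp), if_pos (by simp; omega), if_pos h]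
        have hj : (j:ℕ) = (i:ℕ)+k+1 := h.symm
        have key : (Real.sqrt (Nat.factorial ((i:ℕ)+k)) / Real.sqrt (Nat.factorial (i:ℕ)))
            * Real.sqrt (((i:ℕ):ℝ)+k+1)
            = Real.sqrt (Nat.factorial (j:ℕ)) / Real.sqrt (Nat.factorial (i:ℕ)) := by
          rw [hj, Nat.factorial_succ]
          push_cast
          rw [Real.sqrt_mul (by positivity)]
          ring
        exact_mod_cast congrArg Complex.ofReal key
      · intro b _ hb
        rw [ih, if_neg, zero_mul]
        intro hc; exact hb (by rw [Fin.ext_iff]; simp; omega)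
      · intro hmem; exact absurd (Finset.mem_univ _) hmem
    · rw [if_neg h]
      apply Finset.sum_eq_zero
      intro b _
      rw [ih, annOp_apply]
      rcases eq_or_ne ((i:ℕ)+k) ((b:ℕ)) with hb | hb
      · rw [if_neg (show ¬((b:ℕ)+1 = (j:ℕ)) by omega), mul_zero]
      · rw [if_neg hb, zero_mul]

lemma annOp_prod_apply (D k : ℕ) (i j : Fin D) :
    ((annOp D)ᴴ ^ (k + 1) * annOp D ^ k) i j =
      if (j:ℕ)+1 = (i:ℕ) ∧ k ≤ (j:ℕ) then
        ((Real.sqrt (Nat.factorial (j:ℕ)) * Real.sqrt (Nat.factorial ((j:ℕ)+1))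
          / (Nat.factorial ((j:ℕ)-k)) : ℝ) : ℂ) else 0 := by
  rw [← Matrix.conjTranspose_pow, Matrix.mul_apply]
  have hct : ∀ l : Fin D, ((annOp D ^ (k+1))ᴴ) i l =
      if (l:ℕ)+(k+1) = (i:ℕ) then
        ((Real.sqrt (Nat.factorial (i:ℕ)) / Real.sqrt (Nat.factorial (l:ℕ)) : ℝ) : ℂ) else 0 := by
    intro l
    rw [Matrix.conjTranspose_apply, annOp_pow_apply]
    split <;> simp [Complex.conj_ofReal]
  by_cases h : (j:ℕ)+1 = (i:ℕ) ∧ k ≤ (j:ℕ)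
  · obtain ⟨h1, h2⟩ := h
    have hl : (j:ℕ)-k < D := by have := j.2; omega
    rw [Finset.sum_eq_single (⟨(j:ℕ)-k, hl⟩ : Fin D)]
    · rw [hct, annOp_pow_apply, if_pos (by simp; omega), if_pos (by simp; omega),
        if_pos ⟨h1, h2⟩]
      rw [← Complex.ofReal_mul]
      congr 1
      simp only [Fin.val_mk]
      rw [div_mul_div_comm, Real.mul_self_sqrt (by positivity),
        show (i:ℕ) = (j:ℕ)+1 from h1.symm]
      ring
    · intro b _ hb
      rw [hct, if_neg, zero_mul]
      intro hc; exact hb (by rw [Fin.ext_iff]; simp; omega)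
    · intro hmem; exact absurd (Finset.mem_univ _) hmem
  · rw [if_neg h]
    apply Finset.sum_eq_zero
    intro b _
    rw [hct, annOp_pow_apply]
    rcases eq_or_ne ((b:ℕ)+(k+1)) ((i:ℕ)) with hb | hb
    · rw [if_neg (show ¬((b:ℕ)+k = (j:ℕ)) by omega), mul_zero]
    · rw [if_neg hb, zero_mul]

lemma antiAnnOp_apply (D : ℕ) (i j : Fin D) :
    antiAnnOp D i j = if ((j:ℕ)+1) % D = (i:ℕ) ∧ 1 ≤ (j:ℕ) then
      ((Real.sqrt ((D:ℝ) - (j:ℕ)) : ℝ) : ℂ) else 0 := by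
  unfold antiAnnOp
  rw [Matrix.sum_apply]
  by_cases h : ((j:ℕ)+1) % D = (i:ℕ) ∧ 1 ≤ (j:ℕ)
  · have hmem : (j:ℕ) ∈ Finset.Icc 1 (D-1) := by
      rw [Finset.mem_Icc]; have := j.2; omega
    rw [Finset.sum_eq_single (⟨(j:ℕ), hmem⟩ : {x // x ∈ Finset.Icc 1 (D-1)})]
    · simp [Matrix.single, Fin.ext_iff, h.1, h.2]
    · intro b _ hb
      simp only [Matrix.smul_apply, Matrix.single, Matrix.of_apply, smul_eq_mul]
      rw [if_neg, mul_zero]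
      rintro ⟨h1, h2⟩
      rw [Fin.ext_iff] at h2
      exact hb (Subtype.ext (by simpa using h2))
    · intro hmem'; exact absurd (Finset.mem_attach _ _) hmem'
  · rw [if_neg h]
    apply Finset.sum_eq_zero
    intro b _
    simp only [Matrix.smul_apply, Matrix.single, Matrix.of_apply, smul_eq_mul]
    rw [if_neg, mul_zero]
    rintro ⟨h1, h2⟩
    rw [Fin.ext_iff] at h1 h2
    simp only [Fin.val_mk] at h1 h2
    have hb := Finset.mem_Icc.mp b.2
    exact h ⟨by rw [← h2]; exact h1, by omega⟩

lemma binom_sum (n : ℕ) : ∑ t ∈ Finset.range (n+1),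
    ((-1:ℂ)^t / ((Nat.factorial t : ℂ) * (Nat.factorial (n-t) : ℂ)))
    = if n = 0 then 1 else 0 := by
  have key : ∀ t ∈ Finset.range (n+1), ((-1:ℂ))^t / (Nat.factorial t * Nat.factorial (n-t))
      = ((-1)^t * (n.choose t)) / (Nat.factorial n) := by
    intro t ht
    have h := Nat.choose_mul_factorial_mul_factorial (Nat.lt_succ_iff.mp (Finset.mem_range.mp ht))
    rw [div_eq_div_iff (mul_ne_zero (Nat.cast_ne_zero.mpr (Nat.factorial_ne_zero _))
      (Nat.cast_ne_zero.mpr (Nat.factorial_ne_zero _)))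
      (Nat.cast_ne_zero.mpr (Nat.factorial_ne_zero _))]
    have : ((Nat.factorial n : ℕ) : ℂ) = ((n.choose t * t.factorial * (n-t).factorial : ℕ) : ℂ) := by
      rw [h]
    rw [this]; push_cast; ring
  rw [Finset.sum_congr rfl key, ← Finset.sum_div]
  have h2 : ∑ t ∈ Finset.range (n+1), ((-1:ℂ))^t * (n.choose t) = if n = 0 then 1 else 0 := by
    have h := Int.alternating_sum_range_choose (n := n)
    have := congrArg (Int.cast : ℤ → ℂ) h
    push_cast at this
    rw [← this]
  rw [h2]
  split
  · rename_i hn; subst hn; simp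
  · exact zero_div _

lemma main_sum (D n : ℕ) (hD : 2 ≤ D) (hn1 : 1 ≤ n) (hn2 : n ≤ D - 2) :
    ∑ k ∈ Finset.Icc 1 (D - 2), ∑ m ∈ Finset.Icc 1 k,
      ((((Real.sqrt (((D - m : ℕ) : ℝ) /
            ((Nat.factorial m * Nat.factorial (m + 1) : ℕ) : ℝ)) : ℝ) : ℂ) *
          (-1) ^ (k - m) / (Nat.factorial (k - m) : ℂ)) *
        (if k ≤ n then ((Real.sqrt (Nat.factorial n) * Real.sqrt (Nat.factorial (n+1))
            / (Nat.factorial (n-k)) : ℝ) : ℂ) else 0))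
    = ((Real.sqrt ((D:ℝ) - n) : ℝ) : ℂ) := by
  set A : ℕ → ℂ := fun m => (((Real.sqrt (((D - m : ℕ) : ℝ) /
      ((Nat.factorial m * Nat.factorial (m + 1) : ℕ) : ℝ)) : ℝ) : ℂ)) with hA
  set B : ℂ := ((Real.sqrt (Nat.factorial n) * Real.sqrt (Nat.factorial (n+1)) : ℝ) : ℂ) with hB
  have step1 : ∑ k ∈ Finset.Icc 1 (D - 2), ∑ m ∈ Finset.Icc 1 k,
      ((A m * (-1) ^ (k - m) / (Nat.factorial (k - m) : ℂ)) *
        (if k ≤ n then ((Real.sqrt (Nat.factorial n) * Real.sqrt (Nat.factorial (n+1))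
            / (Nat.factorial (n-k)) : ℝ) : ℂ) else 0))
      = ∑ k ∈ Finset.Icc 1 n, ∑ m ∈ Finset.Icc 1 k,
        (A m * B) * ((-1) ^ (k - m) /
          ((Nat.factorial (k - m) : ℂ) * (Nat.factorial (n - k) : ℂ))) := by
    rw [← Finset.sum_subset (Finset.Icc_subset_Icc_right (by omega : n ≤ D - 2))]
    · apply Finset.sum_congr rfl
      intro k hk
      rw [if_pos (Finset.mem_Icc.mp hk).2]
      apply Finset.sum_congr rfl
      intro m hm
      rw [hB]
      push_cast
      ring
    · intro k hk hknot
      apply Finset.sum_eq_zero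
      intro m hm
      rw [if_neg, mul_zero]
      rw [Finset.mem_Icc] at hk hknot
      omega
  rw [step1]
  have swap : ∑ k ∈ Finset.Icc 1 n, ∑ m ∈ Finset.Icc 1 k,
        (A m * B) * ((-1) ^ (k - m) /
          ((Nat.factorial (k - m) : ℂ) * (Nat.factorial (n - k) : ℂ)))
      = ∑ m ∈ Finset.Icc 1 n, ∑ k ∈ Finset.Icc m n,
        (A m * B) * ((-1) ^ (k - m) /
          ((Nat.factorial (k - m) : ℂ) * (Nat.factorial (n - k) : ℂ))) := by
    have := Finset.sum_Ico_Ico_comm 1 (n+1) (fun m k =>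
      (A m * B) * ((-1:ℂ) ^ (k - m) /
          ((Nat.factorial (k - m) : ℂ) * (Nat.factorial (n - k) : ℂ))))
    simp only [Finset.Ico_add_one_right_eq_Icc] at this
    exact this.symm
  rw [swap]
  have inner : ∀ m ∈ Finset.Icc 1 n, ∑ k ∈ Finset.Icc m n,
        (A m * B) * ((-1:ℂ) ^ (k - m) /
          ((Nat.factorial (k - m) : ℂ) * (Nat.factorial (n - k) : ℂ)))
      = (A m * B) * (if n - m = 0 then 1 else 0) := by
    intro m hm
    have hmn := (Finset.mem_Icc.mp hm).2
    rw [← Finset.mul_sum]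
    congr 1
    rw [← Finset.Ico_add_one_right_eq_Icc, Finset.sum_Ico_eq_sum_range]
    have hcount : n + 1 - m = (n - m) + 1 := by omega
    rw [hcount]
    rw [← binom_sum (n - m)]
    apply Finset.sum_congr rfl
    intro t ht
    rw [Finset.mem_range] at ht
    have e1 : m + t - m = t := by omega
    have e2 : n - (m + t) = (n - m) - t := by omega
    rw [e1, e2]
  rw [Finset.sum_congr rfl inner]
  rw [Finset.sum_eq_single_of_mem n (Finset.mem_Icc.mpr ⟨hn1, le_refl n⟩)]
  · rw [Nat.sub_self, if_pos rfl, mul_one, hA, hB]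
    rw [← Complex.ofReal_mul]
    congr 1
    rw [Real.sqrt_div (by positivity), Nat.cast_mul,
      Real.sqrt_mul (by positivity), div_mul_cancel₀ _ (by positivity)]
    congr 1
    rw [Nat.cast_sub (by omega)]
  · intro m hm hmn
    rw [if_neg, mul_zero]
    rw [Finset.mem_Icc] at hm
    omega

/-- The antiparticle annihilation operator as a polynomial in the particle ladder
operators (Eq. (3.52)): for `D ≥ 2`,
`ā = ∑_{k=1}^{D-2} ∑_{m=1}^{k} √((D−m)/(m!(m+1)!)) (−1)^{k−m}/(k−m)! • (a†)^{k+1} a^k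
  + (√((D−1)!))⁻¹ • a^{D−1}`. -/
theorem antiparticle_as_polynomial (D : ℕ) (hD : 2 ≤ D) :
    antiAnnOp D =
      (∑ k ∈ Finset.Icc 1 (D - 2), ∑ m ∈ Finset.Icc 1 k,
        (((Real.sqrt (((D - m : ℕ) : ℝ) /
              ((Nat.factorial m * Nat.factorial (m + 1) : ℕ) : ℝ)) : ℝ) : ℂ) *
            (-1) ^ (k - m) / (Nat.factorial (k - m) : ℂ)) •
          ((annOp D)ᴴ ^ (k + 1) * annOp D ^ k)) +
        (((Real.sqrt (Nat.factorial (D - 1)) : ℝ) : ℂ))⁻¹ • annOp D ^ (D - 1) := by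
  ext i j
  rw [antiAnnOp_apply]
  simp only [Matrix.add_apply, Matrix.sum_apply, Matrix.smul_apply, smul_eq_mul,
    annOp_prod_apply, annOp_pow_apply]
  by_cases hB : (j:ℕ)+1 = (i:ℕ) ∧ 1 ≤ (j:ℕ)
  · obtain ⟨hB1, hB2⟩ := hB
    have hjD : (j:ℕ) ≤ D - 2 := by have := i.2; omega
    have hmod : ((j:ℕ)+1) % D = (i:ℕ) := by
      rw [Nat.mod_eq_of_lt (by have := i.2; omega), hB1]
    rw [if_pos ⟨hmod, hB2⟩,
      if_neg (show ¬((i:ℕ) + (D-1) = (j:ℕ)) by omega), mul_zero, add_zero]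
    rw [← main_sum D (j:ℕ) hD hB2 hjD]
    apply Finset.sum_congr rfl
    intro k hk
    apply Finset.sum_congr rfl
    intro m hm
    congr 1
    by_cases hk2 : k ≤ (j:ℕ)
    · rw [if_pos hk2, if_pos ⟨hB1, hk2⟩]
    · rw [if_neg hk2, if_neg (by tauto)]
  · by_cases hA : (i:ℕ) = 0 ∧ (j:ℕ) = D - 1
    · obtain ⟨hi0, hjD1⟩ := hA
      have hcond : ((j:ℕ)+1) % D = (i:ℕ) ∧ 1 ≤ (j:ℕ) := by
        constructor
        · rw [hjD1, Nat.sub_add_cancel (by omega), Nat.mod_self, hi0]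
        · omega
      rw [if_pos hcond, if_pos (show (i:ℕ) + (D-1) = (j:ℕ) by omega)]
      rw [Finset.sum_eq_zero, zero_add]
      · rw [hi0, hjD1]
        rw [Nat.factorial_zero, Nat.cast_one, Real.sqrt_one, div_one]
        rw [inv_mul_cancel₀ (by
          rw [Complex.ofReal_ne_zero]
          positivity)]
        have : (D:ℝ) - ((D-1:ℕ):ℝ) = 1 := by
          rw [Nat.cast_sub (by omega)]; ring
        rw [this, Real.sqrt_one, Complex.ofReal_one]
      · intro k hk
        apply Finset.sum_eq_zero
        intro m hm
        rw [if_neg, mul_zero]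
        rintro ⟨hc1, hc2⟩
        omega
    · rw [if_neg (by
        rintro ⟨hc1, hc2⟩
        by_cases hj : (j:ℕ) = D - 1
        · exact hA ⟨by rw [← hc1, hj, Nat.sub_add_cancel (by omega), Nat.mod_self], hj⟩
        · have hlt : (j:ℕ)+1 < D := by have := j.2; omega
          exact hB ⟨by rw [← hc1, Nat.mod_eq_of_lt hlt], hc2⟩)]
      rw [Finset.sum_eq_zero, zero_add]
      · rw [if_neg, mul_zero]
        intro hc
        have hj2 := j.2
        have hi2 := i.2
        have hi0 : (i:ℕ) = 0 := by omega
        have hjD1 : (j:ℕ) = D - 1 := by omega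
        exact hA ⟨hi0, hjD1⟩
      · intro k hk
        apply Finset.sum_eq_zero
        intro m hm
        rw [if_neg, mul_zero]
        rintro ⟨hc1, hc2⟩
        rw [Finset.mem_Icc] at hk
        exact hB ⟨hc1, by omega⟩
end
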